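/- arXiv:math/0703578 — 2 statements merged into one kernel-verified Lean document; each statement's English description precedes it below -/
import Mathlib

section
/- Let z₁, z₂ be integers, let A = 27z₁⁴ + 6z₁z₂ and B = z₂² − 27z₁⁶, and assume 4A³ + 27B² ≠ 0. Then the point (3z₁², 9z₁³ + z₂) lies on the elliptic curve E : Y² = X³ + A·X + B and has order 3 in E(ℚ). -/
/-!
The tangent line to `E` at `P = (3z₁², 9z₁³ + z₂)` is `Y = 3z₁X + z₂`, and
`X³ + AX + B - (3z₁X + z₂)² = (X - 3z₁²)³`, so `P` is a flex: the tangent meets `E` only at `P`,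
hence `2P = -P`. The discriminant condition rules out `9z₁³ + z₂ = 0`, where the tangent at `P`
would be vertical.
-/

/-- The elliptic curve `E : Y² = X³ + A·X + B` over `ℚ`, as an affine Weierstrass curve. -/
noncomputable def E (A B : ℤ) : WeierstrassCurve.Affine ℚ :=
  { a₁ := 0, a₂ := 0, a₃ := 0, a₄ := (A : ℚ), a₆ := (B : ℚ) }

namespace WeierstrassCurve.Affine

lemma nonsingular_of_Y_ne {R : Type*} [CommRing R] {W : WeierstrassCurve.Affine R} {x y : R}
    (h : W.Equation x y) (hy : y ≠ W.negY x y) : W.Nonsingular x y :=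
  (nonsingular_iff x y).2 ⟨h, Or.inr hy⟩

namespace Point

variable {F : Type*} [Field F] [DecidableEq F] {W : WeierstrassCurve.Affine F} {x y : F}

lemma add_self_eq_neg_of_addX_eq {h : W.Nonsingular x y} (hy : y ≠ W.negY x y)
    (hx : W.addX x x (W.slope x x y y) = x) : some _ _ h + some _ _ h = -some _ _ h := by
  have hnegAddY : W.negAddY x x y (W.slope x x y y) = y := by
    rw [negAddY, hx, sub_self, mul_zero, zero_add]
  rw [add_self_of_Y_ne' hy]
  congr! 2

lemma addOrderOf_eq_three_of_addX_eq (h : W.Nonsingular x y) (hy : y ≠ W.negY x y)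
    (hx : W.addX x x (W.slope x x y y) = x) : addOrderOf (some _ _ h) = 3 := by
  have : Fact (Nat.Prime 3) := ⟨Nat.prime_three⟩
  refine addOrderOf_eq_prime ?_ (some_ne_zero h)
  rw [succ_nsmul, two_nsmul, add_self_eq_neg_of_addX_eq hy hx, neg_add_cancel]

end Point

end WeierstrassCurve.Affine

open WeierstrassCurve.Affine

lemma E_negY (A B : ℤ) (x y : ℚ) : (E A B).negY x y = -y := by
  simp [negY, E]

lemma E_Y_ne_negY {A B : ℤ} {y : ℚ} (x : ℚ) (hy : y ≠ 0) : y ≠ (E A B).negY x y := by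
  rwa [E_negY, ne_eq, CharZero.eq_neg_self_iff]

section

variable {z₁ z₂ A B : ℤ} (hA : A = 27 * z₁ ^ 4 + 6 * z₁ * z₂) (hB : B = z₂ ^ 2 - 27 * z₁ ^ 6)
include hA hB

lemma E_equation : (E A B).Equation ((3 * z₁ ^ 2 : ℤ) : ℚ) ((9 * z₁ ^ 3 + z₂ : ℤ) : ℚ) := by
  rw [equation_iff]
  simp only [E, hA, hB]
  push_cast
  ring

lemma nine_mul_pow_three_add_ne_zero (hΔ : 4 * A ^ 3 + 27 * B ^ 2 ≠ 0) : 9 * z₁ ^ 3 + z₂ ≠ 0 := by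
  intro h
  apply hΔ
  rw [hA, hB, eq_neg_of_add_eq_zero_right h]
  ring

omit hB in
lemma E_slope (hy : 9 * z₁ ^ 3 + z₂ ≠ 0) :
    (E A B).slope ((3 * z₁ ^ 2 : ℤ) : ℚ) ((3 * z₁ ^ 2 : ℤ) : ℚ) ((9 * z₁ ^ 3 + z₂ : ℤ) : ℚ)
      ((9 * z₁ ^ 3 + z₂ : ℤ) : ℚ) = 3 * z₁ := by
  have hy' : ((9 * z₁ ^ 3 + z₂ : ℤ) : ℚ) ≠ 0 := Int.cast_ne_zero.2 hy
  rw [slope_of_Y_ne rfl (E_Y_ne_negY _ hy'), E_negY, sub_neg_eq_add, div_eq_iff (by simpa using hy')]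
  simp only [E, hA]
  push_cast
  ring

end

theorem point_of_order_three (z₁ z₂ A B : ℤ)
    (hA : A = 27 * z₁ ^ 4 + 6 * z₁ * z₂) (hB : B = z₂ ^ 2 - 27 * z₁ ^ 6)
    (hΔ : 4 * A ^ 3 + 27 * B ^ 2 ≠ 0) :
    ∃ h : (E A B).Nonsingular ((3 * z₁ ^ 2 : ℤ) : ℚ) ((9 * z₁ ^ 3 + z₂ : ℤ) : ℚ),
      addOrderOf (WeierstrassCurve.Affine.Point.some _ _ h) = 3 := by
  have hy₀ := nine_mul_pow_three_add_ne_zero hA hB hΔ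
  have hy := E_Y_ne_negY (A := A) (B := B) ((3 * z₁ ^ 2 : ℤ) : ℚ) (Int.cast_ne_zero.2 hy₀)
  refine ⟨nonsingular_of_Y_ne (E_equation hA hB) hy, Point.addOrderOf_eq_three_of_addX_eq _ hy ?_⟩
  rw [E_slope hA hy₀, addX]
  simp only [E]
  push_cast
  ring
end

section
/- The elliptic curve E : Y² = X³ + A·X + B (with A, B ∈ ℤ and 4A³ + 27B² ≠ 0) has a rational point of order 8 if and only if there exist integers z₁, z₂, z₃ such that 3A = −(z₁⁴ − 4z₁²z₂² + z₂⁴), 27B = (z₁² − 2z₂²)·(2z₁⁴ − 8z₁²z₂² − z₂⁴), and z₃² = z₁·(2z₂ + z₁). -/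
/-!
Let `P` have order 8, with `2P = (u, v)` and `4P = (m, 0)`; then `m` is a root of
`f = X³ + AX + B`, hence an integer. For every root `m` of `f` the doubling formula reads
`x(2R) - m = (((x(R) - m)² - f'(m)) / 2y(R))²`. Applied to `2P` it gives `(u - m)² = f'(m)`,
applied to `P` it makes `u - m = z₂²` a square; the curve equation at `2P` then makes
`2z₂² + 3m = z₁²` a square, which expresses `A` and `B` through `z₁, z₂`, and the curve
equation at `P` combined with the doubling formula factors as a difference of squares and
yields `z₃`. The `zᵢ` are integers because `z₂⁴ = 3m² + A` and `z₁² = 3m + 2z₂²`.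
Conversely, with `3m = z₁² - 2z₂²`, the point `(m + z₂(z₁+z₂+z₃), z₂z₃(z₁+z₂+z₃))` has
`2P = (m + z₂², ±z₁z₂²)` and `4P = (m, 0)`.
-/

lemma cubic_eq_sub_mul_of_root {R : Type*} [CommRing R] {a b m : R}
    (hm : m ^ 3 + a * m + b = 0) (x : R) :
    x ^ 3 + a * x + b = (x - m) * ((x - m) ^ 2 + 3 * m * (x - m) + (3 * m ^ 2 + a)) := by
  linear_combination hm

lemma double_sub_root_mul_sq {R : Type*} [CommRing R] {a b m x y x' : R}
    (hm : m ^ 3 + a * m + b = 0) (hxy : y ^ 2 = x ^ 3 + a * x + b)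
    (hx' : 4 * y ^ 2 * x' = (3 * x ^ 2 + a) ^ 2 - 8 * x * y ^ 2) :
    (x' - m) * (2 * y) ^ 2 = ((x - m) ^ 2 - (3 * m ^ 2 + a)) ^ 2 := by
  linear_combination hx' - (8 * x + 4 * m) * hxy - (8 * x + 4 * m) * hm

lemma params_eqns_of_coeffs {R : Type*} [CommRing R] {a b m z₁ z₂ : R}
    (ha : a = z₂ ^ 4 - 3 * m ^ 2) (hb : b = 2 * m ^ 3 - m * z₂ ^ 4)
    (hm : 3 * m = z₁ ^ 2 - 2 * z₂ ^ 2) :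
    3 * a = -(z₁ ^ 4 - 4 * z₁ ^ 2 * z₂ ^ 2 + z₂ ^ 4) ∧
      27 * b = (z₁ ^ 2 - 2 * z₂ ^ 2) * (2 * z₁ ^ 4 - 8 * z₁ ^ 2 * z₂ ^ 2 - z₂ ^ 4) := by
  subst ha hb
  constructor
  · linear_combination -(3 * m + z₁ ^ 2 - 2 * z₂ ^ 2) * hm
  · linear_combination (2 * ((3 * m) ^ 2 + 3 * m * (z₁ ^ 2 - 2 * z₂ ^ 2) +
      (z₁ ^ 2 - 2 * z₂ ^ 2) ^ 2) - 9 * z₂ ^ 4) * hm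

lemma coeffs_of_params_eqns {F : Type*} [Field F] (h3 : (3 : F) ≠ 0) {a b m z₁ z₂ : F}
    (hm : 3 * m = z₁ ^ 2 - 2 * z₂ ^ 2) (ha : 3 * a = -(z₁ ^ 4 - 4 * z₁ ^ 2 * z₂ ^ 2 + z₂ ^ 4))
    (hb : 27 * b = (z₁ ^ 2 - 2 * z₂ ^ 2) * (2 * z₁ ^ 4 - 8 * z₁ ^ 2 * z₂ ^ 2 - z₂ ^ 4)) :
    a = z₂ ^ 4 - 3 * m ^ 2 ∧ b = 2 * m ^ 3 - m * z₂ ^ 4 := by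
  constructor
  · refine mul_left_cancel₀ h3 ?_
    linear_combination ha + (3 * m + z₁ ^ 2 - 2 * z₂ ^ 2) * hm
  · refine mul_left_cancel₀ (pow_ne_zero 3 h3) ?_
    linear_combination hb - (2 * ((3 * m) ^ 2 + 3 * m * (z₁ ^ 2 - 2 * z₂ ^ 2) +
      (z₁ ^ 2 - 2 * z₂ ^ 2) ^ 2) - 9 * z₂ ^ 4) * hm

lemma disc_eq_of_coeffs {R : Type*} [CommRing R] {a b m z₁ z₂ : R}
    (ha : a = z₂ ^ 4 - 3 * m ^ 2) (hb : b = 2 * m ^ 3 - m * z₂ ^ 4)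
    (hm : 3 * m = z₁ ^ 2 - 2 * z₂ ^ 2) :
    4 * a ^ 3 + 27 * b ^ 2 = z₂ ^ 8 * z₁ ^ 2 * (4 * z₂ ^ 2 - z₁ ^ 2) := by
  subst ha hb
  linear_combination -(z₂ ^ 8 * (3 * m + z₁ ^ 2 - 2 * z₂ ^ 2)) * hm

lemma params_ne_zero {F : Type*} [Field F] {z₁ z₂ z₃ : F}
    (hD : z₂ ^ 8 * z₁ ^ 2 * (4 * z₂ ^ 2 - z₁ ^ 2) ≠ 0) (hz₃ : z₃ ^ 2 = z₁ * (2 * z₂ + z₁)) :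
    z₁ ≠ 0 ∧ z₂ ≠ 0 ∧ z₂ * z₃ * (z₁ + z₂ + z₃) ≠ 0 := by
  have hz₁ : z₁ ≠ 0 := by rintro rfl; simp at hD
  have hz₂ : z₂ ≠ 0 := by rintro rfl; simp at hD
  have hz₃0 : z₃ ≠ 0 := by
    rintro rfl
    apply hD
    linear_combination -(z₂ ^ 8 * z₁ * (2 * z₂ - z₁)) * hz₃
  have hS : z₁ + z₂ + z₃ ≠ 0 := fun hS => hz₂ <| pow_eq_zero_iff two_ne_zero |>.mp <| by
    linear_combination hz₃ + (z₁ + z₂ - z₃) * hS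
  exact ⟨hz₁, hz₂, mul_ne_zero (mul_ne_zero hz₂ hz₃0) hS⟩

lemma exists_params_of_halvings {F : Type*} [Field F] (h2 : (2 : F) ≠ 0) {a b m u v ξ η : F}
    (hm : m ^ 3 + a * m + b = 0) (hw : (u - m) ^ 2 = 3 * m ^ 2 + a)
    (hQ : v ^ 2 = u ^ 3 + a * u + b) (hv : v ≠ 0)
    (hP : η ^ 2 = ξ ^ 3 + a * ξ + b) (hη : η ≠ 0)
    (hu : (u - m) * (2 * η) ^ 2 = ((ξ - m) ^ 2 - (3 * m ^ 2 + a)) ^ 2) :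
    ∃ z₁ z₂ z₃ : F, 3 * a = -(z₁ ^ 4 - 4 * z₁ ^ 2 * z₂ ^ 2 + z₂ ^ 4) ∧
      27 * b = (z₁ ^ 2 - 2 * z₂ ^ 2) * (2 * z₁ ^ 4 - 8 * z₁ ^ 2 * z₂ ^ 2 - z₂ ^ 4) ∧
      z₃ ^ 2 = z₁ * (2 * z₂ + z₁) := by
  rw [cubic_eq_sub_mul_of_root hm, ← hw] at hQ hP
  rw [← hw] at hu
  have hw0 : u - m ≠ 0 := fun h0 => hv (pow_eq_zero_iff two_ne_zero |>.mp (by rw [hQ, h0]; ring))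
  obtain ⟨r, hr⟩ : ∃ r, r ^ 2 = u - m :=
    ⟨((ξ - m) ^ 2 - (u - m) ^ 2) / (2 * η), by field_simp; linear_combination -hu⟩
  obtain ⟨s, hs⟩ : ∃ s, s ^ 2 = 2 * (u - m) + 3 * m :=
    ⟨v / (u - m), by field_simp; linear_combination hQ⟩
  rw [← hr] at hP hu hw hw0 hs
  have hr0 : r ≠ 0 := fun h0 => hw0 (by rw [h0]; ring)
  have h3m : 3 * m = s ^ 2 - 2 * r ^ 2 := by linear_combination -hs
  have ha : a = r ^ 4 - 3 * m ^ 2 := by linear_combination -hw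
  have hb : b = 2 * m ^ 3 - m * r ^ 4 := by linear_combination hm - m * ha
  set X := ξ - m
  have hX : ((X - r ^ 2) ^ 2 - 2 * r * s * X) * ((X - r ^ 2) ^ 2 + 2 * r * s * X) = 0 := by
    linear_combination -hu + 4 * r ^ 2 * hP + 4 * r ^ 2 * X ^ 2 * h3m
  obtain ⟨ρ, hρ, hρX⟩ : ∃ ρ, ρ ^ 2 = r ^ 2 ∧ (X - ρ ^ 2) ^ 2 = 2 * ρ * s * X := by
    rcases mul_eq_zero.mp hX with h | h
    · exact ⟨r, rfl, by linear_combination h⟩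
    · exact ⟨-r, by ring, by linear_combination h⟩
  have hρ0 : ρ ≠ 0 := fun h0 => hr0 (pow_eq_zero_iff two_ne_zero |>.mp (by rw [← hρ, h0]; ring))
  obtain ⟨t, ht⟩ : ∃ t, t ^ 2 = s * (2 * ρ + s) :=
    ⟨(X - ρ ^ 2 - ρ * s) / ρ, by field_simp; linear_combination hρX⟩
  have hρ4 : ρ ^ 4 = r ^ 4 := by rw [show ρ ^ 4 = (ρ ^ 2) ^ 2 by ring, hρ]; ring
  obtain ⟨hA, hB⟩ := params_eqns_of_coeffs (hρ4 ▸ ha) (hρ4 ▸ hb) (hρ ▸ h3m)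
  exact ⟨s, ρ, t, hA, hB, ht⟩

namespace WeierstrassCurve.Affine

variable {F : Type*} [Field F] {W : Affine F} [W.IsShortNF]

lemma negY_of_isShortNF (x y : F) : W.negY x y = -y := by
  simp [negY]

lemma equation_iff_of_isShortNF (x y : F) :
    W.Equation x y ↔ y ^ 2 = x ^ 3 + W.a₄ * x + W.a₆ := by
  simp [equation_iff]

lemma Y_ne_negY_of_isShortNF (h2 : (2 : F) ≠ 0) {x y : F} (hy : y ≠ 0) : y ≠ W.negY x y := by
  rw [negY_of_isShortNF]
  exact fun h => hy ((mul_eq_zero.mp (by linear_combination h : 2 * y = 0)).resolve_left h2)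

namespace Point

variable [DecidableEq F]

lemma exists_two_nsmul_some (h2 : (2 : F) ≠ 0) {x y : F} (h : W.Nonsingular x y) (hy : y ≠ 0) :
    ∃ (x' y' : F) (h' : W.Nonsingular x' y'), 2 • some x y h = some x' y' h' ∧
      4 * y ^ 2 * x' = (3 * x ^ 2 + W.a₄) ^ 2 - 8 * x * y ^ 2 := by
  have hne := Y_ne_negY_of_isShortNF (W := W) h2 (x := x) hy
  refine ⟨_, _, _, by rw [two_nsmul, add_self_of_Y_ne hne], ?_⟩
  have h2y : 2 * y ≠ 0 := mul_ne_zero h2 hy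
  rw [addX, slope_of_Y_ne rfl hne, negY_of_isShortNF, a₁_of_isShortNF, a₂_of_isShortNF,
    show y - -y = 2 * y by ring]
  field_simp
  ring

lemma two_nsmul_some_eq_zero_iff (h2 : (2 : F) ≠ 0) {x y : F} (h : W.Nonsingular x y) :
    2 • some x y h = 0 ↔ y = 0 := by
  refine ⟨fun h0 => by_contra fun hy => ?_, fun hy => ?_⟩
  · obtain ⟨x', y', h', hP, -⟩ := exists_two_nsmul_some h2 h hy
    exact some_ne_zero h' (hP ▸ h0)
  · rw [two_nsmul]
    exact add_self_of_Y_eq (by simp [hy])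

theorem exists_params_of_addOrderOf_eq_eight (h2 : (2 : F) ≠ 0) {P : W.Point}
    (hP8 : addOrderOf P = 8) :
    ∃ z₁ z₂ z₃ : F, 3 * W.a₄ = -(z₁ ^ 4 - 4 * z₁ ^ 2 * z₂ ^ 2 + z₂ ^ 4) ∧
      27 * W.a₆ = (z₁ ^ 2 - 2 * z₂ ^ 2) * (2 * z₁ ^ 4 - 8 * z₁ ^ 2 * z₂ ^ 2 - z₂ ^ 4) ∧
      z₃ ^ 2 = z₁ * (2 * z₂ + z₁) := by
  have h8 : 8 • P = 0 := hP8 ▸ addOrderOf_nsmul_eq_zero P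
  have h4 : 4 • P ≠ 0 := fun h => absurd (hP8 ▸ addOrderOf_dvd_of_nsmul_eq_zero h) (by norm_num)
  have h2P : 2 • P ≠ 0 := fun h => h4 (by rw [show 4 = 2 * 2 from rfl, mul_nsmul, h, nsmul_zero])
  rcases P with _ | @⟨ξ, η, hP⟩
  · exact absurd (nsmul_zero 2) h2P
  have hη : η ≠ 0 := mt (two_nsmul_some_eq_zero_iff h2 hP).mpr h2P
  obtain ⟨u, v, hQ, hPQ, hu⟩ := exists_two_nsmul_some h2 hP hη
  have hv : v ≠ 0 := fun h0 =>
    h4 (by rw [show 4 = 2 * 2 from rfl, mul_nsmul', hPQ, two_nsmul_some_eq_zero_iff h2, h0])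
  obtain ⟨m, yT, hT, hQT, hm⟩ := exists_two_nsmul_some h2 hQ hv
  have hyT : yT = 0 := (two_nsmul_some_eq_zero_iff h2 hT).mp <| by
    rwa [← hQT, ← hPQ, ← mul_nsmul', ← mul_nsmul']
  have eqP := (equation_iff_of_isShortNF _ _).mp hP.1
  have eqQ := (equation_iff_of_isShortNF _ _).mp hQ.1
  have hroot : m ^ 3 + W.a₄ * m + W.a₆ = 0 := by
    have eqT := (equation_iff_of_isShortNF _ _).mp hT.1
    rw [hyT] at eqT
    linear_combination -eqT
  have hw : (u - m) ^ 2 = 3 * m ^ 2 + W.a₄ := by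
    have := double_sub_root_mul_sq hroot eqQ hm
    rw [sub_self, zero_mul, eq_comm, pow_eq_zero_iff two_ne_zero, sub_eq_zero] at this
    exact this
  exact exists_params_of_halvings h2 hroot hw eqQ hv eqP hη (double_sub_root_mul_sq hroot eqP hu)

lemma exists_two_nsmul_some_eq_some_root (h2 : (2 : F) ≠ 0) {u v m : F} (hQ : W.Nonsingular u v)
    (hv : v ≠ 0) (hroot : m ^ 3 + W.a₄ * m + W.a₆ = 0) (hw : (u - m) ^ 2 = 3 * m ^ 2 + W.a₄) :
    ∃ hT : W.Nonsingular m 0, 2 • some u v hQ = some m 0 hT := by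
  obtain ⟨m', yT, hT, hQT, hm'⟩ := exists_two_nsmul_some h2 hQ hv
  have hmm' : m' = m := by
    have := double_sub_root_mul_sq hroot ((equation_iff_of_isShortNF _ _).mp hQ.1) hm'
    rw [hw, sub_self, zero_pow two_ne_zero] at this
    exact sub_eq_zero.mp <| (mul_eq_zero.mp this).resolve_right (pow_ne_zero 2 (mul_ne_zero h2 hv))
  subst hmm'
  have hyT : yT = 0 := by
    have := (equation_iff_of_isShortNF _ _).mp hT.1
    rw [hroot] at this
    exact pow_eq_zero_iff two_ne_zero |>.mp this
  subst hyT
  exact ⟨hT, hQT⟩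

theorem exists_addOrderOf_eq_eight_of_params (h2 : (2 : F) ≠ 0) (h3 : (3 : F) ≠ 0)
    (hΔ : W.Δ ≠ 0) {z₁ z₂ z₃ : F} (hA : 3 * W.a₄ = -(z₁ ^ 4 - 4 * z₁ ^ 2 * z₂ ^ 2 + z₂ ^ 4))
    (hB : 27 * W.a₆ = (z₁ ^ 2 - 2 * z₂ ^ 2) * (2 * z₁ ^ 4 - 8 * z₁ ^ 2 * z₂ ^ 2 - z₂ ^ 4))
    (hz₃ : z₃ ^ 2 = z₁ * (2 * z₂ + z₁)) :
    ∃ P : W.Point, addOrderOf P = 8 := by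
  obtain ⟨m, hm⟩ : ∃ m : F, 3 * m = z₁ ^ 2 - 2 * z₂ ^ 2 := ⟨_, mul_div_cancel₀ _ h3⟩
  obtain ⟨ha, hb⟩ := coeffs_of_params_eqns h3 hm hA hB
  have hroot : m ^ 3 + W.a₄ * m + W.a₆ = 0 := by rw [ha, hb]; ring
  have hD := right_ne_zero_of_mul (Δ_of_isShortNF W ▸ hΔ)
  rw [disc_eq_of_coeffs ha hb hm] at hD
  obtain ⟨hz₁, hz₂, hy⟩ := params_ne_zero hD hz₃
  set x := m + z₂ * (z₁ + z₂ + z₃)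
  set y := z₂ * z₃ * (z₁ + z₂ + z₃)
  have hxy : y ^ 2 = x ^ 3 + W.a₄ * x + W.a₆ := by
    rw [cubic_eq_sub_mul_of_root hroot, ha]
    linear_combination
      (z₂ ^ 2 * (z₁ + z₂ + z₃) * (z₁ + z₃)) * hz₃ - (z₂ ^ 2 * (z₁ + z₂ + z₃) ^ 2) * hm
  have hP : W.Nonsingular x y :=
    (W.equation_iff_nonsingular_of_Δ_ne_zero hΔ).mp ((equation_iff_of_isShortNF _ _).mpr hxy)
  obtain ⟨u, v, hQ, hPQ, hu⟩ := exists_two_nsmul_some h2 hP hy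
  have hu' : u - m = z₂ ^ 2 := by
    refine mul_right_cancel₀ (pow_ne_zero 2 (mul_ne_zero h2 hy)) ?_
    rw [double_sub_root_mul_sq hroot hxy hu, ha]
    linear_combination -(z₂ ^ 4 * ((z₁ + z₂ + z₃) ^ 2 - z₂ ^ 2 + 2 * z₃ * (z₁ + z₂ + z₃))) * hz₃
  have hv2 : v ^ 2 = (z₁ * z₂ ^ 2) ^ 2 := by
    rw [(equation_iff_of_isShortNF _ _).mp hQ.1, cubic_eq_sub_mul_of_root hroot, hu', ha]
    linear_combination z₂ ^ 4 * hm
  have hv : v ≠ 0 := by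
    rintro rfl
    exact mul_ne_zero hz₁ (pow_ne_zero 2 hz₂) <|
      pow_eq_zero_iff two_ne_zero |>.mp (by rw [← hv2]; ring)
  obtain ⟨hT, hQT⟩ := exists_two_nsmul_some_eq_some_root h2 hQ hv hroot (by rw [hu', ha]; ring)
  refine ⟨some x y hP, addOrderOf_eq_prime_pow (p := 2) (n := 2) ?_ ?_⟩
  · rw [pow_two, mul_nsmul', hPQ, hQT]
    exact some_ne_zero hT
  · rw [pow_succ, mul_nsmul, pow_two, mul_nsmul', hPQ, hQT, two_nsmul_some_eq_zero_iff h2]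

end Point

end WeierstrassCurve.Affine

lemma exists_int_eq_of_isIntegral {q : ℚ} (h : IsIntegral ℤ q) : ∃ k : ℤ, q = k := by
  obtain ⟨k, hk⟩ := IsIntegrallyClosed.isIntegral_iff.mp h
  exact ⟨k, by simp [← hk]⟩

lemma exists_int_eq_of_pow_eq {q : ℚ} {n : ℕ} (hn : n ≠ 0) {k : ℤ} (h : q ^ n = k) :
    ∃ j : ℤ, q = j :=
  exists_int_eq_of_isIntegral <| .of_pow (Nat.pos_of_ne_zero hn) <| h ▸ isIntegral_algebraMap

open Polynomial in
lemma exists_int_eq_of_cubic_eq_zero {a b : ℤ} {q : ℚ} (h : q ^ 3 + a * q + b = 0) :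
    ∃ k : ℤ, q = k :=
  exists_int_eq_of_isIntegral ⟨X ^ 3 + C a * X + C b, by monicity!, by
    rw [← aeval_def]; simpa using h⟩

lemma exists_int_params_of_rat_params {A B : ℤ} {z₁ z₂ z₃ : ℚ}
    (hA : 3 * (A : ℚ) = -(z₁ ^ 4 - 4 * z₁ ^ 2 * z₂ ^ 2 + z₂ ^ 4))
    (hB : 27 * (B : ℚ) = (z₁ ^ 2 - 2 * z₂ ^ 2) * (2 * z₁ ^ 4 - 8 * z₁ ^ 2 * z₂ ^ 2 - z₂ ^ 4))
    (hz₃ : z₃ ^ 2 = z₁ * (2 * z₂ + z₁)) :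
    ∃ n₁ n₂ n₃ : ℤ, 3 * A = -(n₁ ^ 4 - 4 * n₁ ^ 2 * n₂ ^ 2 + n₂ ^ 4) ∧
      27 * B = (n₁ ^ 2 - 2 * n₂ ^ 2) * (2 * n₁ ^ 4 - 8 * n₁ ^ 2 * n₂ ^ 2 - n₂ ^ 4) ∧
      n₃ ^ 2 = n₁ * (2 * n₂ + n₁) := by
  obtain ⟨m, hm⟩ : ∃ m : ℚ, 3 * m = z₁ ^ 2 - 2 * z₂ ^ 2 := ⟨_, mul_div_cancel₀ _ three_ne_zero⟩
  obtain ⟨ha, hb⟩ := coeffs_of_params_eqns three_ne_zero hm hA hB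
  obtain ⟨k, rfl⟩ := exists_int_eq_of_cubic_eq_zero (a := A) (b := B) (q := m) <| by
    rw [ha, hb]; ring
  obtain ⟨n₂, rfl⟩ := exists_int_eq_of_pow_eq four_ne_zero (q := z₂) (k := A + 3 * k ^ 2) <| by
    push_cast; linear_combination -ha
  obtain ⟨n₁, rfl⟩ := exists_int_eq_of_pow_eq two_ne_zero (q := z₁) (k := 3 * k + 2 * n₂ ^ 2) <| by
    push_cast; linear_combination -hm
  obtain ⟨n₃, rfl⟩ := exists_int_eq_of_pow_eq two_ne_zero (q := z₃) (k := n₁ * (2 * n₂ + n₁)) <| by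
    push_cast; exact hz₃
  exact ⟨n₁, n₂, n₃, by exact_mod_cast hA, by exact_mod_cast hB, by exact_mod_cast hz₃⟩

open WeierstrassCurve Affine.Point

instance (A B : ℤ) : (E A B).IsShortNF := ⟨rfl, rfl, rfl⟩

lemma E_a₄ (A B : ℤ) : (E A B).a₄ = A := rfl

lemma E_a₆ (A B : ℤ) : (E A B).a₆ = B := rfl

theorem order_eight_iff (A B : ℤ) (hΔ : 4 * A ^ 3 + 27 * B ^ 2 ≠ 0) :
    (∃ P : (E A B).Point, addOrderOf P = 8) ↔
      ∃ z₁ z₂ z₃ : ℤ,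
        3 * A = -(z₁ ^ 4 - 4 * z₁ ^ 2 * z₂ ^ 2 + z₂ ^ 4) ∧
        27 * B = (z₁ ^ 2 - 2 * z₂ ^ 2) * (2 * z₁ ^ 4 - 8 * z₁ ^ 2 * z₂ ^ 2 - z₂ ^ 4) ∧
        z₃ ^ 2 = z₁ * (2 * z₂ + z₁) := by
  constructor
  · rintro ⟨P, hP⟩
    obtain ⟨z₁, z₂, z₃, h₁, h₂, h₃⟩ := exists_params_of_addOrderOf_eq_eight two_ne_zero hP
    exact exists_int_params_of_rat_params h₁ h₂ h₃
  · rintro ⟨z₁, z₂, z₃, h₁, h₂, h₃⟩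
    refine exists_addOrderOf_eq_eight_of_params two_ne_zero three_ne_zero ?_
      (z₁ := z₁) (z₂ := z₂) (z₃ := z₃) ?_ ?_ (by exact_mod_cast h₃)
    · rw [Δ_of_isShortNF, E_a₄, E_a₆]
      exact mul_ne_zero (by norm_num) (by exact_mod_cast hΔ)
    · rw [E_a₄]; exact_mod_cast h₁
    · rw [E_a₆]; exact_mod_cast h₂
end
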